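/- For all integers 1 ≤ k < l, the graph XF₅^{2k} is not isomorphic to any induced subgraph of XF₅^{2l}. -/

import Mathlib

universe u

/-- The Seidel complement of `G` at `v`: adjacency between the open neighborhood of `v`
and the set of vertices different from `v` and not adjacent to `v` is complemented,
all other adjacencies are unchanged. -/
def seidelCompl {V : Type u} (G : SimpleGraph V) (v : V) : SimpleGraph V where
  Adj x y := x ≠ y ∧
    Xor' (G.Adj x y)
      ((G.Adj v x ∧ ¬ G.Adj v y ∧ y ≠ v) ∨ (G.Adj v y ∧ ¬ G.Adj v x ∧ x ≠ v))
  symm := by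
    constructor
    rintro x y ⟨hxy, h⟩
    refine ⟨hxy.symm, ?_⟩
    have h1 : G.Adj x y ↔ G.Adj y x := G.adj_comm x y
    unfold Xor' Xor at h ⊢
    tauto
  loopless := ⟨fun x h => h.1 rfl⟩

/-- The graph `XF₅ⁿ`: vertices `A = inl 0`, `B = inl 1`, `C = inl 2`, `D = inl 3` and the
path vertices `p₁, …, p_{n+1}` (`pᵢ = inr (i-1)`). Its edges are exactly: the path edges
`pᵢ p_{i+1}`, the domination edges `C pᵢ` and `D pᵢ` for all `i`, and the edges
`A D`, `A p₁`, `B C`, `B p_{n+1}`. -/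
def XF5 (n : ℕ) : SimpleGraph (Fin 4 ⊕ Fin (n + 1)) :=
  SimpleGraph.fromRel fun x y =>
    match x, y with
    | Sum.inr i, Sum.inr j => (i : ℕ) + 1 = (j : ℕ)
    | Sum.inl a, Sum.inr i =>
        a = 2 ∨ a = 3 ∨ (a = 0 ∧ (i : ℕ) = 0) ∨ (a = 1 ∧ (i : ℕ) = n)
    | Sum.inl a, Sum.inl b => (a = 0 ∧ b = 3) ∨ (a = 1 ∧ b = 2)
    | _, _ => False

/-!
`C` and `D` are non-adjacent with the `n + 1 ≥ 3` path vertices as common neighbours, so an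
induced embedding `f` sends them to such a pair of `XF₅ᵐ`; as `A` and `B` have degree 2, that pair
is `{C, D}` or `{pᵢ, pᵢ₊₂}`. The only vertices adjacent to exactly one of `C, D` are `A` and `B`,
whose path neighbours are the two ends `p₁, p_{m+1}`.

If `f` maps `{C, D}` to `{C, D}`, then `f A, f B` are `A, B` and the path `p₁ ⋯ p_{n+1}` goes to a
walk of length `n` joining the two ends, so `m ≤ n`. If `{f C, f D} = {pᵢ, pᵢ₊₂}`, whose only
common neighbours are `C, D, pᵢ₊₁`, the induced paths `p₁ p₂ p₃` and `p_{n+1} pₙ p_{n-1}` must have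
their middle vertices sent to `pᵢ₊₁`, so `f p₁, f p_{n+1}` are `C, D`. Then again `f A, f B` are
`A, B`, and their neighbours `f D, f C` are the two ends of the path, forcing `m = 2`.
-/

open Sum SimpleGraph

lemma Set.ncard_le_two_of_subset_pair {α : Type*} {s : Set α} {a b : α} (h : s ⊆ {a, b}) :
    s.ncard ≤ 2 :=
  (Set.ncard_le_ncard h).trans <| (Set.ncard_insert_le a {b}).trans <| by simp

lemma SimpleGraph.Embedding.ncard_commonNeighbors_le {V W : Type*} [Finite W]
    {G : SimpleGraph V} {H : SimpleGraph W} (f : G ↪g H) (v w : V) :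
    (G.commonNeighbors v w).ncard ≤ (H.commonNeighbors (f v) (f w)).ncard :=
  Set.ncard_le_ncard_of_injOn f (fun _ hu => by simpa [mem_commonNeighbors] using hu)
    f.injective.injOn

/-- The middle vertex `y` has to be `c`, as `a` and `b` are not adjacent. -/
lemma SimpleGraph.eq_or_eq_of_adj_of_adj_of_mem_triple {V : Type*} {G : SimpleGraph V}
    {a b c x y z : V} (hab : ¬G.Adj a b) (hx : x ∈ ({a, b, c} : Set V))
    (hy : y ∈ ({a, b, c} : Set V)) (hz : z ∈ ({a, b, c} : Set V)) (hxz : x ≠ z)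
    (hxy : G.Adj x y) (hyz : G.Adj y z) : x = a ∨ x = b := by
  have hba : ¬G.Adj b a := fun h => hab h.symm
  simp only [Set.mem_insert_iff, Set.mem_singleton_iff] at hx hy hz
  rcases hx with rfl | rfl | rfl <;> rcases hy with rfl | rfl | rfl <;>
    rcases hz with rfl | rfl | rfl <;> simp_all

lemma Fin.abs_sub_apply_zero_le {n : ℕ} (g : Fin (n + 1) → ℤ)
    (hg : ∀ t : Fin n, |g t.succ - g t.castSucc| ≤ 1) (t : Fin (n + 1)) : |g t - g 0| ≤ t := by
  induction t using Fin.induction with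
  | zero => simp
  | succ t ih =>
    calc |g t.succ - g 0| ≤ |g t.succ - g t.castSucc| + |g t.castSucc - g 0| := abs_sub_le _ _ _
      _ ≤ 1 + t := add_le_add (hg t) (by simpa using ih)
      _ = t.succ := by simp [add_comm]

namespace XF5

variable {m : ℕ}

@[simp] lemma adj_inl_inl {a b : Fin 4} :
    (XF5 m).Adj (inl a) (inl b) ↔
      a = 0 ∧ b = 3 ∨ a = 3 ∧ b = 0 ∨ a = 1 ∧ b = 2 ∨ a = 2 ∧ b = 1 := by
  simp only [XF5, fromRel_adj, ne_eq, inl.injEq]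
  constructor
  · rintro ⟨-, h⟩
    tauto
  · rintro (⟨rfl, rfl⟩ | ⟨rfl, rfl⟩ | ⟨rfl, rfl⟩ | ⟨rfl, rfl⟩) <;> decide

@[simp] lemma adj_inl_inr {a : Fin 4} {i : Fin (m + 1)} :
    (XF5 m).Adj (inl a) (inr i) ↔
      a = 2 ∨ a = 3 ∨ a = 0 ∧ (i : ℕ) = 0 ∨ a = 1 ∧ (i : ℕ) = m := by
  simp [XF5]

@[simp] lemma adj_inr_inl {a : Fin 4} {i : Fin (m + 1)} :
    (XF5 m).Adj (inr i) (inl a) ↔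
      a = 2 ∨ a = 3 ∨ a = 0 ∧ (i : ℕ) = 0 ∨ a = 1 ∧ (i : ℕ) = m := by
  rw [adj_comm, adj_inl_inr]

@[simp] lemma adj_inr_inr {i j : Fin (m + 1)} :
    (XF5 m).Adj (inr i) (inr j) ↔ (i : ℕ) + 1 = j ∨ (j : ℕ) + 1 = i := by
  simp only [XF5, fromRel_adj, ne_eq, inr.injEq, Fin.ext_iff]
  omega

lemma commonNeighbors_C_D : (XF5 m).commonNeighbors (inl 2) (inl 3) = Set.range inr := by
  ext (a | i)
  · fin_cases a <;> simp [mem_commonNeighbors]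
  · simp [mem_commonNeighbors]

lemma neighborSet_A : (XF5 m).neighborSet (inl 0) = {inl 3, inr 0} := by
  ext (a | i)
  · fin_cases a <;> simp
  · simp

lemma neighborSet_B : (XF5 m).neighborSet (inl 1) = {inl 2, inr (Fin.last m)} := by
  ext (a | i)
  · fin_cases a <;> simp
  · simp [Fin.ext_iff (b := Fin.last m)]

lemma ncard_commonNeighbors_le_two_of_eq_A_or_B {x y : Fin 4 ⊕ Fin (m + 1)}
    (hx : x = inl 0 ∨ x = inl 1) : ((XF5 m).commonNeighbors x y).ncard ≤ 2 := by
  rcases hx with rfl | rfl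
  · exact Set.ncard_le_two_of_subset_pair
      ((commonNeighbors_subset_neighborSet_left _ _ _).trans neighborSet_A.le)
  · exact Set.ncard_le_two_of_subset_pair
      ((commonNeighbors_subset_neighborSet_left _ _ _).trans neighborSet_B.le)

lemma commonNeighbors_inr_inr_subset {i j : Fin (m + 1)} (hij : i ≠ j)
    (h : ¬((i : ℕ) + 2 = j ∨ (j : ℕ) + 2 = i)) :
    (XF5 m).commonNeighbors (inr i) (inr j) ⊆ {inl 2, inl 3} := by
  have := Fin.val_ne_of_ne hij
  rintro (a | t) ⟨hi, hj⟩
  · simp only [mem_neighborSet, adj_inr_inl] at hi hj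
    simp only [Set.mem_insert_iff, Set.mem_singleton_iff, inl.injEq]
    omega
  · simp only [mem_neighborSet, adj_inr_inr] at hi hj
    omega

lemma exists_commonNeighbors_inr_inr_subset {i j : Fin (m + 1)} (hij : i ≠ j) :
    ∃ w, (XF5 m).commonNeighbors (inr i) (inr j) ⊆ {inl 2, inl 3, w} := by
  have := Fin.val_ne_of_ne hij
  refine ⟨inr ⟨min (i : ℕ) j + 1, by omega⟩, ?_⟩
  rintro (a | t) ⟨hi, hj⟩
  · simp only [mem_neighborSet, adj_inr_inl] at hi hj
    simp only [Set.mem_insert_iff, Set.mem_singleton_iff, inl.injEq, reduceCtorEq, or_false]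
    omega
  · simp only [mem_neighborSet, adj_inr_inr] at hi hj
    exact .inr (.inr (congrArg inr (Fin.ext (show (t : ℕ) = min (i : ℕ) j + 1 by omega))))

lemma val_eq_zero_of_adj_D_of_not_adj_C {x : Fin 4 ⊕ Fin (m + 1)} {i : Fin (m + 1)}
    (hD : (XF5 m).Adj x (inl 3)) (hC : ¬(XF5 m).Adj x (inl 2)) (hi : (XF5 m).Adj x (inr i)) :
    (i : ℕ) = 0 := by
  rcases x with a | j
  · fin_cases a <;> simp_all
  · simp_all

lemma val_eq_of_adj_C_of_not_adj_D {x : Fin 4 ⊕ Fin (m + 1)} {i : Fin (m + 1)}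
    (hC : (XF5 m).Adj x (inl 2)) (hD : ¬(XF5 m).Adj x (inl 3)) (hi : (XF5 m).Adj x (inr i)) :
    (i : ℕ) = m := by
  rcases x with a | j
  · fin_cases a <;> simp_all
  · simp_all

lemma val_eq_ends_of_adj_of_not_adj {x y u v : Fin 4 ⊕ Fin (m + 1)} {i j : Fin (m + 1)}
    (hu : u = inl 2 ∨ u = inl 3) (hv : v = inl 2 ∨ v = inl 3) (huv : u ≠ v)
    (hxu : (XF5 m).Adj x u) (hxv : ¬(XF5 m).Adj x v)
    (hyv : (XF5 m).Adj y v) (hyu : ¬(XF5 m).Adj y u)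
    (hxi : (XF5 m).Adj x (inr i)) (hyj : (XF5 m).Adj y (inr j)) :
    (i : ℕ) = 0 ∧ (j : ℕ) = m ∨ (i : ℕ) = m ∧ (j : ℕ) = 0 := by
  rcases hu with rfl | rfl <;> rcases hv with rfl | rfl <;> simp only [ne_eq, not_true] at huv
  · exact .inr ⟨val_eq_of_adj_C_of_not_adj_D hxu hxv hxi,
      val_eq_zero_of_adj_D_of_not_adj_C hyv hyu hyj⟩
  · exact .inl ⟨val_eq_zero_of_adj_D_of_not_adj_C hxu hxv hxi,
      val_eq_of_adj_C_of_not_adj_D hyv hyu hyj⟩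

theorem eq_C_D_or_inr_of_three_le_ncard_commonNeighbors {x y : Fin 4 ⊕ Fin (m + 1)}
    (hxy : x ≠ y) (hadj : ¬(XF5 m).Adj x y) (h3 : 3 ≤ ((XF5 m).commonNeighbors x y).ncard) :
    (x = inl 2 ∨ x = inl 3) ∧ (y = inl 2 ∨ y = inl 3) ∨
      ∃ i j : Fin (m + 1), x = inr i ∧ y = inr j ∧ ((i : ℕ) + 2 = j ∨ (j : ℕ) + 2 = i) := by
  have hinl : ∀ {z w}, 3 ≤ ((XF5 m).commonNeighbors z w).ncard → ∀ a : Fin 4, z = inl a →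
      a = 2 ∨ a = 3 := by
    rintro z w h a rfl
    by_contra ha
    have := ncard_commonNeighbors_le_two_of_eq_A_or_B (y := w) (x := inl a)
      (by fin_cases a <;> simp_all)
    omega
  have h3' := commonNeighbors_symm (XF5 m) x y ▸ h3
  rcases x with a | i <;> rcases y with b | j
  · left
    rcases hinl h3 a rfl with rfl | rfl <;> rcases hinl h3' b rfl with rfl | rfl <;> simp
  · rcases hinl h3 a rfl with rfl | rfl <;> simp at hadj
  · rcases hinl h3' b rfl with rfl | rfl <;> simp at hadj
  · refine .inr ⟨i, j, rfl, rfl, ?_⟩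
    by_contra h
    have := Set.ncard_le_two_of_subset_pair (commonNeighbors_inr_inr_subset (by simpa using hxy) h)
    omega

variable {n : ℕ}

theorem le_of_embedding_of_map_C_D (f : XF5 n ↪g XF5 m)
    (hC : f (inl 2) = inl 2 ∨ f (inl 2) = inl 3) (hD : f (inl 3) = inl 2 ∨ f (inl 3) = inl 3) :
    m ≤ n := by
  have hrange : (XF5 m).commonNeighbors (f (inl 2)) (f (inl 3)) = Set.range inr := by
    have hne : f (inl 2) ≠ f (inl 3) := f.injective.ne (by simp)
    rcases hC with hC | hC <;> rcases hD with hD | hD <;> rw [hC, hD] at hne ⊢ <;>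
      simp only [ne_eq, not_true] at hne
    exacts [commonNeighbors_C_D, (commonNeighbors_symm ..).trans commonNeighbors_C_D]
  have hpath : ∀ t, ∃ s, f (inr t) = inr s := by
    intro t
    have ht : f (inr t) ∈ (XF5 m).commonNeighbors (f (inl 2)) (f (inl 3)) := by
      simp [mem_commonNeighbors]
    obtain ⟨s, hs⟩ := hrange ▸ ht
    exact ⟨s, hs.symm⟩
  choose g hg using hpath
  have hstep : ∀ t : Fin n, |(g t.succ : ℤ) - g t.castSucc| ≤ 1 := by
    intro t
    have := f.map_adj_iff.2 (adj_inr_inr.2 (Or.inl rfl : (t.castSucc : ℕ) + 1 = t.succ ∨ _))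
    rw [hg, hg, adj_inr_inr] at this
    rw [abs_le]
    omega
  have hends := val_eq_ends_of_adj_of_not_adj (x := f (inl 0)) (y := f (inl 1))
    (i := g 0) (j := g (Fin.last n)) hD hC (f.injective.ne (by simp))
    (f.map_adj_iff.2 (by simp)) (by rw [f.map_adj_iff]; simp) (f.map_adj_iff.2 (by simp))
    (by rw [f.map_adj_iff]; simp) (by rw [← hg]; exact f.map_adj_iff.2 (by simp))
    (by rw [← hg]; exact f.map_adj_iff.2 (by simp))
  have := abs_le.1 (Fin.abs_sub_apply_zero_le (fun t => (g t : ℤ)) hstep (Fin.last n))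
  rw [Fin.val_last] at this
  omega

theorem val_eq_ends_of_embedding_of_map_C_D_inr (hn : 2 ≤ n) (f : XF5 n ↪g XF5 m)
    {i j : Fin (m + 1)} (hC : f (inl 2) = inr i) (hD : f (inl 3) = inr j) :
    (i : ℕ) = 0 ∧ (j : ℕ) = m ∨ (i : ℕ) = m ∧ (j : ℕ) = 0 := by
  have hij : i ≠ j := by
    rintro rfl
    exact absurd (f.injective (hC.trans hD.symm)) (by simp)
  obtain ⟨w, hw⟩ := exists_commonNeighbors_inr_inr_subset hij
  have hmem : ∀ t, f (inr t) ∈ ({inl 2, inl 3, w} : Set (Fin 4 ⊕ Fin (m + 1))) := fun t =>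
    hw (by rw [← hC, ← hD]; simp [mem_commonNeighbors])
  have hend : ∀ s t u (hs : s ≤ n) (ht : t ≤ n) (hu : u ≤ n), s + 1 = t ∨ t + 1 = s →
      t + 1 = u ∨ u + 1 = t → s ≠ u →
      f (inr ⟨s, by omega⟩) = inl 2 ∨ f (inr ⟨s, by omega⟩) = inl 3 :=
    fun s t u _ ht hu hst htu hsu =>
      eq_or_eq_of_adj_of_adj_of_mem_triple (by simp) (hmem _) (hmem ⟨t, by omega⟩)
        (hmem ⟨u, by omega⟩) (f.injective.ne (by simpa using hsu))
        (f.map_adj_iff.2 (adj_inr_inr.2 hst)) (f.map_adj_iff.2 (adj_inr_inr.2 htu))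
  have hfirst := hend 0 1 2 (by omega) (by omega) (by omega) (by omega) (by omega) (by omega)
  have hlast := hend n (n - 1) (n - 2) le_rfl (by omega) (by omega) (by omega) (by omega)
    (by omega)
  have := val_eq_ends_of_adj_of_not_adj (x := f (inl 0)) (y := f (inl 1)) (i := j) (j := i)
    hfirst hlast (f.injective.ne (by simpa using (by omega : n ≠ 0)))
    (f.map_adj_iff.2 (by simp)) (by simpa using (by omega : n ≠ 0))
    (f.map_adj_iff.2 (by simp)) (by simpa using (by omega : 0 ≠ n))
    (by rw [← hD]; exact f.map_adj_iff.2 (by simp)) (by rw [← hC]; exact f.map_adj_iff.2 (by simp))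
  omega

end XF5

/-- For `1 ≤ k < l`, `XF₅^{2k}` is not isomorphic to any induced subgraph of `XF₅^{2l}`. -/
theorem xf5_no_induced_embedding (k l : ℕ) (hk : 1 ≤ k) (hkl : k < l) :
    IsEmpty (XF5 (2 * k) ↪g XF5 (2 * l)) := by
  refine ⟨fun f => ?_⟩
  have h3 : 3 ≤ ((XF5 (2 * l)).commonNeighbors (f (inl 2)) (f (inl 3))).ncard := by
    refine le_trans ?_ (f.ncard_commonNeighbors_le _ _)
    rw [XF5.commonNeighbors_C_D, Set.ncard_range_of_injective inr_injective,
      Nat.card_eq_fintype_card, Fintype.card_fin]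
    omega
  rcases XF5.eq_C_D_or_inr_of_three_le_ncard_commonNeighbors (f.injective.ne (by simp))
      (by simp) h3 with ⟨hC, hD⟩ | ⟨i, j, hC, hD, hij⟩
  · have := XF5.le_of_embedding_of_map_C_D f hC hD
    omega
  · have := XF5.val_eq_ends_of_embedding_of_map_C_D_inr (by omega) f hC hD
    omega
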